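/- arXiv:2006.00951 — 4 statements merged into one kernel-verified Lean document; each statement's English description precedes it below -/
import Mathlib

section
/- Let S = [[S₀, s], [0ᵀ, 0]] be an (n+1)×(n+1) column-stochastic matrix with zero last row, α ∈ [0,1), u = (u₀, u_{n+1}) a probability vector, and v = (v₀, v_{n+1}) the PageRank of S w.r.t. u. Define the adjusted teleport vector ů₀ = u₀ + α u_{n+1} s. Then v₀ = (1-α) Σ_{x=0}^∞ α^x S₀^x ů₀. -/
theorem contraction_identity (n : ℕ) (S0 : Matrix (Fin n) (Fin n) ℝ) (s : Fin n → ℝ)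
    (S : Matrix (Fin n ⊕ Fin 1) (Fin n ⊕ Fin 1) ℝ)
    (hS : S = Matrix.fromBlocks S0 (Matrix.of fun i (_ : Fin 1) => s i) 0 0)
    (hSnn : ∀ i j, 0 ≤ S i j) (hScol : ∀ j, ∑ i, S i j = 1)
    (α : ℝ) (hα0 : 0 ≤ α) (hα1 : α < 1)
    (u : Fin n ⊕ Fin 1 → ℝ) (hu0 : ∀ i, 0 ≤ u i) (hu1 : ∑ i, u i = 1)
    (v : Fin n ⊕ Fin 1 → ℝ) (hv : v = α • S.mulVec v + (1 - α) • u)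
    (uadj : Fin n → ℝ)
    (huadj : uadj = fun i => u (Sum.inl i) + α * u (Sum.inr 0) * s i) :
    (fun i => v (Sum.inl i)) =
      (1 - α) • ∑' x : ℕ, α ^ x • (S0 ^ x).mulVec uadj := by
  -- basic facts about S0
  have hS0nn : ∀ i j, 0 ≤ S0 i j := by
    intro i j
    have h := hSnn (Sum.inl i) (Sum.inl j)
    rwa [hS, Matrix.fromBlocks_apply₁₁] at h
  have hS0col : ∀ j, ∑ i, S0 i j = 1 := by
    intro j
    have h := hScol (Sum.inl j)
    rw [hS] at h
    simpa [Fintype.sum_sum_type] using h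
  -- powers of S0 are nonneg with column sums 1
  have hpow : ∀ x : ℕ, (∀ i j, 0 ≤ (S0 ^ x) i j) ∧ (∀ j, ∑ i, (S0 ^ x) i j = 1) := by
    intro x
    induction x with
    | zero =>
      constructor
      · intro i j
        simp only [pow_zero, Matrix.one_apply]
        split <;> norm_num
      · intro j
        simp [Matrix.one_apply]
    | succ x ih =>
      constructor
      · intro i j
        rw [pow_succ, Matrix.mul_apply]
        exact Finset.sum_nonneg fun k _ => mul_nonneg (ih.1 i k) (hS0nn k j)
      · intro j
        have : ∑ i, (S0 ^ (x + 1)) i j = ∑ i, ∑ k, (S0 ^ x) i k * S0 k j := by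
          simp [pow_succ, Matrix.mul_apply]
        rw [this, Finset.sum_comm]
        have : ∀ k, ∑ i, (S0 ^ x) i k * S0 k j = S0 k j := by
          intro k
          rw [← Finset.sum_mul, ih.2 k, one_mul]
        simp [this, hS0col j]
  have hpowle : ∀ (x : ℕ) i j, (S0 ^ x) i j ≤ 1 := by
    intro x i j
    calc (S0 ^ x) i j ≤ ∑ i', (S0 ^ x) i' j :=
          Finset.single_le_sum (fun i' _ => (hpow x).1 i' j) (Finset.mem_univ i)
      _ = 1 := (hpow x).2 j
  -- uniform bound on the terms
  set C := ∑ j, |uadj j| with hC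
  have hmvle : ∀ (x : ℕ) i, |(S0 ^ x).mulVec uadj i| ≤ C := by
    intro x i
    have h1 : (S0 ^ x).mulVec uadj i = ∑ j, (S0 ^ x) i j * uadj j := rfl
    rw [h1]
    refine (Finset.abs_sum_le_sum_abs _ _).trans ?_
    refine Finset.sum_le_sum fun j _ => ?_
    rw [abs_mul, abs_of_nonneg ((hpow x).1 i j)]
    exact mul_le_of_le_one_left (abs_nonneg _) (hpowle x i j)
  have hbound : ∀ (x : ℕ) i, |(α ^ x • (S0 ^ x).mulVec uadj) i| ≤ α ^ x * C := by
    intro x i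
    simp only [Pi.smul_apply, smul_eq_mul, abs_mul, abs_pow, abs_of_nonneg hα0]
    exact mul_le_mul_of_nonneg_left (hmvle x i) (pow_nonneg hα0 x)
  have hsum : Summable (fun x : ℕ => α ^ x • (S0 ^ x).mulVec uadj) := by
    rw [Pi.summable]
    intro i
    refine Summable.of_abs ?_
    refine Summable.of_nonneg_of_le (fun x => abs_nonneg _) (fun x => hbound x i) ?_
    exact (summable_geometric_of_lt_one hα0 hα1).mul_right C
  -- the tsum satisfies the fixed point equation
  set T : Fin n → ℝ := ∑' x : ℕ, α ^ x • (S0 ^ x).mulVec uadj with hTdef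
  have hT : T = uadj + α • S0.mulVec T := by
    let L : (Fin n → ℝ) →L[ℝ] (Fin n → ℝ) :=
      LinearMap.toContinuousLinearMap (α • S0.mulVecLin)
    have hL : ∀ w : Fin n → ℝ, L w = α • S0.mulVec w := fun w => rfl
    have hshift : ∀ x : ℕ, α ^ (x + 1) • (S0 ^ (x + 1)).mulVec uadj
        = L (α ^ x • (S0 ^ x).mulVec uadj) := by
      intro x
      rw [hL, pow_succ' S0 x, ← Matrix.mulVec_mulVec, pow_succ']
      rw [Matrix.mulVec_smul, smul_smul]
    conv_lhs => rw [hTdef, Summable.tsum_eq_zero_add hsum]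
    congr 1
    · simp
    · calc (∑' x : ℕ, α ^ (x + 1) • (S0 ^ (x + 1)).mulVec uadj)
          = ∑' x : ℕ, L (α ^ x • (S0 ^ x).mulVec uadj) := by
            exact tsum_congr hshift
        _ = L T := (hsum.hasSum.mapL L).tsum_eq
        _ = α • S0.mulVec T := hL T
  -- v at the last coordinate
  have hvlast : v (Sum.inr 0) = (1 - α) * u (Sum.inr 0) := by
    have h := congrFun hv (Sum.inr 0)
    rw [hS] at h
    have hmv : (Matrix.fromBlocks S0 (Matrix.of fun i (_ : Fin 1) => s i)
        (0 : Matrix (Fin 1) (Fin n) ℝ) (0 : Matrix (Fin 1) (Fin 1) ℝ)).mulVec v (Sum.inr 0)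
        = 0 := by
      show (∑ j, Matrix.fromBlocks S0 (Matrix.of fun i (_ : Fin 1) => s i) 0 0 (Sum.inr 0) j * v j) = 0
      simp [Fintype.sum_sum_type]
    simp only [Pi.add_apply, Pi.smul_apply, smul_eq_mul, hmv, mul_zero, zero_add] at h
    exact h
  -- the first block of v satisfies the same fixed point equation
  set w : Fin n → ℝ := fun i => v (Sum.inl i) with hwdef
  have hw : ∀ i, w i = α * (S0.mulVec w) i + (1 - α) * uadj i := by
    intro i
    have h := congrFun hv (Sum.inl i)
    rw [hS] at h
    have hmv : (Matrix.fromBlocks S0 (Matrix.of fun i (_ : Fin 1) => s i)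
        (0 : Matrix (Fin 1) (Fin n) ℝ) (0 : Matrix (Fin 1) (Fin 1) ℝ)).mulVec v (Sum.inl i)
        = (S0.mulVec w) i + s i * v (Sum.inr 0) := by
      show (∑ j, Matrix.fromBlocks S0 (Matrix.of fun i (_ : Fin 1) => s i) 0 0 (Sum.inl i) j * v j)
          = (S0.mulVec w) i + s i * v (Sum.inr 0)
      rw [Fintype.sum_sum_type]
      simp [Matrix.mulVec, dotProduct, hwdef]
    simp only [Pi.add_apply, Pi.smul_apply, smul_eq_mul, hmv, hvlast] at h
    have hwi : w i = v (Sum.inl i) := rfl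
    simp only [huadj]
    rw [hwi, h]
    ring
  -- f := (1-α) • T satisfies the same equation
  set f : Fin n → ℝ := (1 - α) • T with hfdef
  have hf : ∀ i, f i = α * (S0.mulVec f) i + (1 - α) * uadj i := by
    intro i
    have h := congrFun hT i
    simp only [hfdef, Pi.smul_apply, smul_eq_mul, Pi.add_apply] at h ⊢
    have hmv : (S0.mulVec f) i = (1 - α) * (S0.mulVec T) i := by
      rw [hfdef, Matrix.mulVec_smul]
      rfl
    rw [hmv, h]
    ring
  -- uniqueness via L1 contraction
  have hd : ∀ i, w i - f i = α * (S0.mulVec (fun j => w j - f j)) i := by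
    intro i
    have h1 : (S0.mulVec (fun j => w j - f j)) i = (S0.mulVec w) i - (S0.mulVec f) i := by
      show (∑ j, S0 i j * (w j - f j)) = (∑ j, S0 i j * w j) - ∑ j, S0 i j * f j
      rw [← Finset.sum_sub_distrib]
      exact Finset.sum_congr rfl fun j _ => by ring
    rw [h1, hw i, hf i]
    ring
  have hL1 : ∑ i, |w i - f i| ≤ α * ∑ i, |w i - f i| := by
    calc ∑ i, |w i - f i| = ∑ i, |α * (S0.mulVec (fun j => w j - f j)) i| := by
          exact Finset.sum_congr rfl fun i _ => by rw [hd i]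
      _ ≤ ∑ i, α * ∑ j, S0 i j * |w j - f j| := by
          refine Finset.sum_le_sum fun i _ => ?_
          rw [abs_mul, abs_of_nonneg hα0]
          refine mul_le_mul_of_nonneg_left ?_ hα0
          have h1 : (S0.mulVec (fun j => w j - f j)) i = ∑ j, S0 i j * (w j - f j) := rfl
          rw [h1]
          refine (Finset.abs_sum_le_sum_abs _ _).trans ?_
          refine Finset.sum_le_sum fun j _ => ?_
          rw [abs_mul, abs_of_nonneg (hS0nn i j)]
      _ = α * ∑ j, (∑ i, S0 i j) * |w j - f j| := by
          rw [← Finset.mul_sum, Finset.sum_comm]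
          congr 1
          exact Finset.sum_congr rfl fun j _ => by rw [Finset.sum_mul]
      _ = α * ∑ j, |w j - f j| := by
          congr 1
          exact Finset.sum_congr rfl fun j _ => by rw [hS0col j, one_mul]
  have hzero : ∑ i, |w i - f i| = 0 := by
    by_contra hne
    have hpos : 0 < ∑ i, |w i - f i| :=
      lt_of_le_of_ne (Finset.sum_nonneg fun i _ => abs_nonneg _) (Ne.symm hne)
    nlinarith
  have : ∀ i, w i = f i := by
    intro i
    have h := (Finset.sum_eq_zero_iff_of_nonneg (fun i _ => abs_nonneg (w i - f i))).mp hzero i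
      (Finset.mem_univ i)
    have := abs_eq_zero.mp h
    linarith
  funext i
  exact this i
end

section
/- Let S = [[S₀, s],[0ᵀ,0]] be column-stochastic with zero last row, α ∈ [0,1), u a probability vector, v the PageRank of S w.r.t. u, and ů₀ = u₀ + α u_{n+1} s with |ů₀| > 0. Then the normalized vector v₀/|v₀| is the PageRank of S₀ with respect to the normalized teleport vector ů₀/|ů₀| and damping α, i.e., v₀/|v₀| = α S₀ (v₀/|v₀|) + (1-α) ů₀/|ů₀|. -/
theorem contraction_normalized_pagerank (n : ℕ) (S0 : Matrix (Fin n) (Fin n) ℝ)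
    (s : Fin n → ℝ)
    (S : Matrix (Fin n ⊕ Fin 1) (Fin n ⊕ Fin 1) ℝ)
    (hS : S = Matrix.fromBlocks S0 (Matrix.of fun i (_ : Fin 1) => s i) 0 0)
    (hSnn : ∀ i j, 0 ≤ S i j) (hScol : ∀ j, ∑ i, S i j = 1)
    (α : ℝ) (hα0 : 0 ≤ α) (hα1 : α < 1)
    (u : Fin n ⊕ Fin 1 → ℝ) (hu0 : ∀ i, 0 ≤ u i) (hu1 : ∑ i, u i = 1)
    (v : Fin n ⊕ Fin 1 → ℝ) (hv : v = α • S.mulVec v + (1 - α) • u)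
    (uadj : Fin n → ℝ)
    (huadj : uadj = fun i => u (Sum.inl i) + α * u (Sum.inr 0) * s i)
    (hpos : 0 < ∑ i, uadj i) :
    (∑ i, v (Sum.inl i))⁻¹ • (fun i => v (Sum.inl i)) =
      α • S0.mulVec ((∑ i, v (Sum.inl i))⁻¹ • (fun i => v (Sum.inl i))) +
        (1 - α) • ((∑ i, uadj i)⁻¹ • uadj) := by
  have h1α : (1 : ℝ) - α ≠ 0 := by linarith
  have hvr : v (Sum.inr 0) = (1 - α) * u (Sum.inr 0) := by
    have := congrFun hv (Sum.inr 0)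
    simp [Matrix.mulVec, dotProduct, hS, Fintype.sum_sum_type] at this
    simpa using this
  have key : (fun i => v (Sum.inl i)) =
      α • S0.mulVec (fun i => v (Sum.inl i)) + (1 - α) • uadj := by
    funext i
    have h := congrFun hv (Sum.inl i)
    simp [Matrix.mulVec, dotProduct, hS, Fintype.sum_sum_type, hvr] at h
    simp [Matrix.mulVec, dotProduct, huadj, h]
    ring
  have hcol0 : ∀ j, ∑ i, S0 i j = 1 := by
    intro j
    have := hScol (Sum.inl j)
    simpa [hS, Fintype.sum_sum_type] using this
  have hsum : ∑ i, v (Sum.inl i) = ∑ i, uadj i := by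
    have h := congrArg (fun f : Fin n → ℝ => ∑ i, f i) key
    simp only [Pi.add_apply, Pi.smul_apply, smul_eq_mul, Finset.sum_add_distrib] at h
    rw [← Finset.mul_sum, ← Finset.mul_sum] at h
    have hmv : ∑ i, S0.mulVec (fun i => v (Sum.inl i)) i = ∑ i, v (Sum.inl i) := by
      simp only [Matrix.mulVec, dotProduct]
      rw [Finset.sum_comm]
      simp [← Finset.sum_mul, hcol0]
    rw [hmv] at h
    have : (1 - α) * ∑ i, v (Sum.inl i) = (1 - α) * ∑ i, uadj i := by linarith
    exact mul_left_cancel₀ h1α this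
  rw [hsum]
  set U := ∑ i, uadj i
  have hU : U ≠ 0 := ne_of_gt hpos
  rw [Matrix.mulVec_smul]
  calc U⁻¹ • (fun i => v (Sum.inl i))
      = U⁻¹ • (α • S0.mulVec (fun i => v (Sum.inl i)) + (1 - α) • uadj) := by rw [← key]
    _ = α • U⁻¹ • S0.mulVec (fun i => v (Sum.inl i)) + (1 - α) • U⁻¹ • uadj := by
        rw [smul_add, smul_comm U⁻¹ α, smul_comm U⁻¹ (1 - α)]
end

section
/- Let S be an (n+m)×(n+m) column-stochastic matrix in block form S = [[S₀, B],[0,0]] where the last m rows are zero (nodes n+1,…,n+m have no incoming edges), α ∈ [0,1), and u a probability vector. Let v be the PageRank of S w.r.t. u. Define ů₀ = u₀ + α Σ_{i=1}^m u_{n+i} B_{·,i} (where B_{·,i} is the i-th column of the n×m block B). Then v₀ = (1-α) Σ_{x=0}^∞ α^x S₀^x ů₀, and |v₀| = |ů₀| = 1 - (1-α) Σ_{i=1}^m u_{n+i}. -/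
/-! On the sink-free added nodes the rows of `S` vanish, so the PageRank equation gives
`v₁ = (1 - α) u₁` there; substituted into the top rows, it says that `v₀` is the PageRank of the
column-stochastic block `S₀` for the teleportation vector `ů₀ = u₀ + α B u₁`. For a
column-stochastic `S₀` the entries of `(α S₀)^k` are at most `α^k`, so the Neumann series
`∑ (α S₀)^k` converges and inverts `1 - α S₀`; and since `S₀` preserves coordinate sums, so does
the PageRank map, while `|B u₁| = |u₁|` gives `|ů₀| = |u₀| + α |u₁|`. -/

open Finset

namespace Matrix

variable {ι κ R : Type*} [Fintype ι] [Fintype κ]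

theorem sum_mulVec_of_sum_col_eq_one [NonAssocSemiring R] {B : Matrix ι κ R}
    (hB : ∀ j, ∑ i, B i j = 1) (x : κ → R) : ∑ i, (B *ᵥ x) i = ∑ j, x j := by
  simp only [mulVec, dotProduct]
  rw [sum_comm]
  simp [← sum_mul, hB]

theorem fromBlocks_zero_zero_mem_colStochastic_iff [DecidableEq ι] [DecidableEq κ] [Semiring R]
    [PartialOrder R] [IsOrderedRing R] {A : Matrix ι ι R} {B : Matrix ι κ R} :
    fromBlocks A B 0 0 ∈ colStochastic R (ι ⊕ κ) ↔
      A ∈ colStochastic R ι ∧ (∀ i j, 0 ≤ B i j) ∧ ∀ j, ∑ i, B i j = 1 := by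
  simp only [mem_colStochastic_iff_sum, Sum.forall, forall_and, fromBlocks_apply₁₁,
    fromBlocks_apply₂₁, fromBlocks_apply₁₂, fromBlocks_apply₂₂, zero_apply, le_refl, implies_true,
    and_true, Fintype.sum_sum_type, sum_const_zero, add_zero]
  tauto

theorem summable_pow_smul_of_mem_colStochastic [DecidableEq ι] {M : Matrix ι ι ℝ} {α : ℝ}
    (hM : M ∈ colStochastic ℝ ι) (hα0 : 0 ≤ α) (hα1 : α < 1) :
    Summable fun k : ℕ => (α • M) ^ k := by
  have hbound (k : ℕ) (i j : ι) : ‖((α • M) ^ k) i j‖ ≤ α ^ k := by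
    have hMk := pow_mem hM k
    rw [smul_pow, smul_apply, smul_eq_mul, norm_mul, norm_pow, Real.norm_of_nonneg hα0,
      Real.norm_of_nonneg (nonneg_of_mem_colStochastic hMk)]
    exact mul_le_of_le_one_right (pow_nonneg hα0 k) (le_one_of_mem_colStochastic hMk)
  refine Pi.summable.2 fun i => Pi.summable.2 fun j => ?_
  exact .of_norm_bounded (summable_geometric_of_lt_one hα0 hα1) (hbound · i j)

end Matrix

open Matrix

def IsPageRank {ι R : Type*} [Fintype ι] [Ring R] (S : Matrix ι ι R) (α : R) (u v : ι → R) :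
    Prop :=
  v = α • S *ᵥ v + (1 - α) • u

namespace IsPageRank

variable {ι κ R : Type*} [Fintype ι] [Fintype κ]

theorem comp_inl_of_fromBlocks_zero_zero [CommRing R] {A : Matrix ι ι R} {B : Matrix ι κ R}
    {α : R} {u v : ι ⊕ κ → R} (hv : IsPageRank (fromBlocks A B 0 0) α u v) :
    IsPageRank A α (u ∘ Sum.inl + α • B *ᵥ (u ∘ Sum.inr)) (v ∘ Sum.inl) := by
  unfold IsPageRank at hv ⊢
  rw [fromBlocks_mulVec] at hv
  have hsink : v ∘ Sum.inr = (1 - α) • u ∘ Sum.inr := by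
    conv_lhs => rw [hv]
    ext j
    simp
  conv_lhs => rw [hv]
  rw [hsink, mulVec_smul]
  ext i
  simp only [Function.comp_apply, Pi.add_apply, Pi.smul_apply, Sum.elim_inl, smul_eq_mul]
  ring

theorem sum_eq [Field R] {S : Matrix ι ι R} {α : R} {u v : ι → R} (hv : IsPageRank S α u v)
    (hS : ∀ j, ∑ i, S i j = 1) (hα : α ≠ 1) : ∑ i, v i = ∑ i, u i := by
  have h := congrArg (fun x => ∑ i, x i) hv
  simp only [Pi.add_apply, Pi.smul_apply, smul_eq_mul, sum_add_distrib, ← mul_sum,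
    sum_mulVec_of_sum_col_eq_one hS] at h
  exact mul_left_cancel₀ (sub_ne_zero.2 hα.symm) (by linear_combination h)

theorem eq_tsum [DecidableEq ι] {S : Matrix ι ι ℝ} {α : ℝ} {u v : ι → ℝ}
    (hv : IsPageRank S α u v) (hS : S ∈ colStochastic ℝ ι) (hα0 : 0 ≤ α) (hα1 : α < 1) :
    v = (1 - α) • ∑' k : ℕ, α ^ k • (S ^ k) *ᵥ u := by
  have hsum := summable_pow_smul_of_mem_colStochastic hS hα0 hα1
  have hres : (1 - α • S) *ᵥ v = (1 - α) • u := by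
    rw [sub_mulVec, one_mulVec, smul_mulVec]
    nth_rewrite 1 [hv]
    abel
  calc v = ((∑' k : ℕ, (α • S) ^ k) * (1 - α • S)) *ᵥ v := by
        rw [hsum.tsum_pow_mul_one_sub, one_mulVec]
    _ = (1 - α) • (∑' k : ℕ, (α • S) ^ k) *ᵥ u := by rw [← mulVec_mulVec, hres, mulVec_smul]
    _ = (1 - α) • ∑' k : ℕ, α ^ k • (S ^ k) *ᵥ u := by
      congr 1
      have := hsum.map_tsum (mulVec.addMonoidHomLeft u)
        (continuous_id.matrix_mulVec continuous_const)
      simpa [mulVec.addMonoidHomLeft, smul_pow, smul_mulVec] using this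

end IsPageRank

theorem multi_contraction_identity_general (n m : ℕ) (S0 : Matrix (Fin n) (Fin n) ℝ)
    (B : Matrix (Fin n) (Fin m) ℝ)
    (S : Matrix (Fin n ⊕ Fin m) (Fin n ⊕ Fin m) ℝ)
    (hS : S = Matrix.fromBlocks S0 B 0 0)
    (hSnn : ∀ i j, 0 ≤ S i j) (hScol : ∀ j, ∑ i, S i j = 1)
    (α : ℝ) (hα0 : 0 ≤ α) (hα1 : α < 1)
    (u : Fin n ⊕ Fin m → ℝ) (hu1 : ∑ i, u i = 1)
    (v : Fin n ⊕ Fin m → ℝ) (hv : v = α • S.mulVec v + (1 - α) • u)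
    (uadj : Fin n → ℝ)
    (huadj : uadj = fun i => u (Sum.inl i) + α * ∑ j : Fin m, u (Sum.inr j) * B i j) :
    (fun i => v (Sum.inl i)) = (1 - α) • ∑' x : ℕ, α ^ x • (S0 ^ x).mulVec uadj ∧
      ∑ i, v (Sum.inl i) = ∑ i, uadj i ∧
      ∑ i, uadj i = 1 - (1 - α) * ∑ j : Fin m, u (Sum.inr j) := by
  subst hS
  obtain ⟨hS0, -, hB⟩ :=
    fromBlocks_zero_zero_mem_colStochastic_iff.1 (mem_colStochastic_iff_sum.2 ⟨hSnn, hScol⟩)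
  replace huadj : uadj = u ∘ Sum.inl + α • B *ᵥ (u ∘ Sum.inr) := by
    rw [huadj]
    ext i
    simp [mulVec, dotProduct, mul_comm]
  have hv0 : IsPageRank S0 α uadj (v ∘ Sum.inl) :=
    huadj ▸ IsPageRank.comp_inl_of_fromBlocks_zero_zero hv
  refine ⟨hv0.eq_tsum hS0 hα0 hα1, hv0.sum_eq (sum_col_of_mem_colStochastic hS0) hα1.ne, ?_⟩
  have hu : ∑ i, u (Sum.inl i) + ∑ j, u (Sum.inr j) = 1 := by rwa [← Fintype.sum_sum_type]
  simp only [huadj, Pi.add_apply, Pi.smul_apply, Function.comp_apply, smul_eq_mul,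
    sum_add_distrib, ← mul_sum, sum_mulVec_of_sum_col_eq_one hB]
  linarith

theorem multi_contraction_identity (n m : ℕ) (S0 : Matrix (Fin n) (Fin n) ℝ)
    (B : Matrix (Fin n) (Fin m) ℝ)
    (S : Matrix (Fin n ⊕ Fin m) (Fin n ⊕ Fin m) ℝ)
    (hS : S = Matrix.fromBlocks S0 B 0 0)
    (hSnn : ∀ i j, 0 ≤ S i j) (hScol : ∀ j, ∑ i, S i j = 1)
    (α : ℝ) (hα0 : 0 ≤ α) (hα1 : α < 1)
    (u : Fin n ⊕ Fin m → ℝ) (hu0 : ∀ i, 0 ≤ u i) (hu1 : ∑ i, u i = 1)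
    (v : Fin n ⊕ Fin m → ℝ) (hv : v = α • S.mulVec v + (1 - α) • u)
    (uadj : Fin n → ℝ)
    (huadj : uadj = fun i => u (Sum.inl i) + α * ∑ j : Fin m, u (Sum.inr j) * B i j) :
    (fun i => v (Sum.inl i)) = (1 - α) • ∑' x : ℕ, α ^ x • (S0 ^ x).mulVec uadj ∧
      ∑ i, v (Sum.inl i) = ∑ i, uadj i ∧
      ∑ i, uadj i = 1 - (1 - α) * ∑ j : Fin m, u (Sum.inr j) :=
  multi_contraction_identity_general n m S0 B S hS hSnn hScol α hα0 hα1 u hu1 v hv uadj huadj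
end

section
/- Let S be an n×n column-stochastic matrix, w and u probability vectors with all entries of u strictly positive, and α, β, γ ∈ [0,1] with α + β + γ = 1, α < 1 and γ > 0. Define R_{i,j} = α S_{i,j} + β w_i + γ u_i. Then R has a unique stationary probability vector y (satisfying y = Ry), and it equals the unique solution of y = αSy + βw + γu among probability vectors. -/
/-!
On probability vectors `R` acts as `y ↦ α • S *ᵥ y + (β • w + γ • u)`, since the rank-one part of
`R` only sees `∑ i, y i = 1`. A column-stochastic matrix does not increase the `ℓ¹` norm, so this
affine map is an `α`-contraction of `ℓ¹` that maps the closed standard simplex into itself, and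
Banach's fixed point theorem yields the unique stationary vector.
-/

open Finset Matrix

namespace Matrix

theorem of_add_mulVec {m n R : Type*} [Fintype n] [CommSemiring R] (A : Matrix m n R)
    (v : m → R) (y : n → R) : (of fun i j => A i j + v i) *ᵥ y = A *ᵥ y + (∑ j, y j) • v := by
  ext i
  simp only [mulVec, dotProduct, of_apply, add_mul, sum_add_distrib, Pi.add_apply, Pi.smul_apply,
    smul_eq_mul, sum_mul]
  simp only [mul_comm]

variable {ι : Type*} [Fintype ι] [DecidableEq ι] {S : Matrix ι ι ℝ}

theorem sum_abs_mulVec_le_of_mem_colStochastic (hS : S ∈ colStochastic ℝ ι) (x : ι → ℝ) :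
    ∑ i, |(S *ᵥ x) i| ≤ ∑ i, |x i| := by
  calc ∑ i, |(S *ᵥ x) i| ≤ ∑ i, ∑ j, S i j * |x j| := by
        refine sum_le_sum fun i _ => (abs_sum_le_sum_abs _ _).trans_eq ?_
        simp only [abs_mul, abs_of_nonneg (nonneg_of_mem_colStochastic hS)]
    _ = ∑ i, |x i| := by
        rw [sum_comm]
        simp [← sum_mul, sum_col_of_mem_colStochastic hS]

theorem smul_mulVec_add_mem_stdSimplex (hS : S ∈ colStochastic ℝ ι) {α : ℝ} (hα : 0 ≤ α)
    {b : ι → ℝ} (hb0 : ∀ i, 0 ≤ b i) (hb1 : ∑ i, b i = 1 - α) {y : ι → ℝ}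
    (hy : y ∈ stdSimplex ℝ ι) : α • S *ᵥ y + b ∈ stdSimplex ℝ ι := by
  refine ⟨fun i => ?_, ?_⟩
  · exact add_nonneg (mul_nonneg hα (nonneg_mulVec_of_mem_colStochastic hS hy.1 i)) (hb0 i)
  · simp [sum_add_distrib, ← mul_sum, sum_mulVec_of_mem_colStochastic hS, hy.2, hb1]

theorem contractingWith_smul_mulVec_add (hS : S ∈ colStochastic ℝ ι) {α : ℝ} (hα0 : 0 ≤ α)
    (hα1 : α < 1) (b : ι → ℝ) :
    ContractingWith ⟨α, hα0⟩
      fun x : PiLp 1 (fun _ : ι => ℝ) => WithLp.toLp 1 (α • S *ᵥ WithLp.ofLp x + b) := by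
  refine ⟨hα1, LipschitzWith.of_dist_le_mul fun x y => ?_⟩
  calc _ = ∑ i, |α * (S *ᵥ (WithLp.ofLp x - WithLp.ofLp y)) i| := by
        simp [PiLp.dist_eq_of_L1, Real.dist_eq, mulVec_sub, mul_sub]
    _ = α * ∑ i, |(S *ᵥ (WithLp.ofLp x - WithLp.ofLp y)) i| := by
        simp [abs_mul, abs_of_nonneg hα0, mul_sum]
    _ ≤ α * ∑ i, |(WithLp.ofLp x - WithLp.ofLp y) i| :=
        mul_le_mul_of_nonneg_left (sum_abs_mulVec_le_of_mem_colStochastic hS _) hα0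
    _ = α * dist x y := by simp [PiLp.dist_eq_of_L1, Real.dist_eq]

theorem existsUnique_eq_smul_mulVec_add_mem_stdSimplex (hS : S ∈ colStochastic ℝ ι) {α : ℝ}
    (hα0 : 0 ≤ α) (hα1 : α < 1) {b : ι → ℝ} (hb0 : ∀ i, 0 ≤ b i) (hb1 : ∑ i, b i = 1 - α) :
    ∃! y, y ∈ stdSimplex ℝ ι ∧ y = α • S *ᵥ y + b := by
  have hT := contractingWith_smul_mulVec_add hS hα0 hα1 b
  have hK : IsComplete (WithLp.ofLp ⁻¹' stdSimplex ℝ ι : Set (PiLp 1 (fun _ : ι => ℝ))) :=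
    (isClosed_stdSimplex ℝ ι |>.preimage (PiLp.continuous_ofLp 1 _)).isComplete
  have hKT : Set.MapsTo
      (fun x : PiLp 1 (fun _ : ι => ℝ) => WithLp.toLp 1 (α • S *ᵥ WithLp.ofLp x + b))
      (WithLp.ofLp ⁻¹' stdSimplex ℝ ι) (WithLp.ofLp ⁻¹' stdSimplex ℝ ι) :=
    fun x hx => smul_mulVec_add_mem_stdSimplex hS hα0 hb0 hb1 hx
  -- `ι` is nonempty because `∑ i, b i = 1 - α ≠ 0`.
  obtain ⟨i, -, -⟩ := exists_ne_zero_of_sum_ne_zero (hb1.trans_ne (sub_ne_zero.2 hα1.ne'))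
  obtain ⟨y, hy, hyT, -⟩ := ContractingWith.exists_fixedPoint' hK hKT (hT.restrict hKT)
    (x := WithLp.toLp 1 (Pi.single i 1)) (single_mem_stdSimplex ℝ i) (edist_ne_top _ _)
  refine ⟨WithLp.ofLp y, ⟨hy, congrArg WithLp.ofLp hyT.symm⟩, fun z ⟨_, hz⟩ => ?_⟩
  exact congrArg WithLp.ofLp
    (hT.fixedPoint_unique' (x := WithLp.toLp 1 z) (congrArg (WithLp.toLp 1) hz.symm) hyT)

end Matrix

theorem attrank_convergence_general (n : ℕ) (S : Matrix (Fin n) (Fin n) ℝ)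
    (hS0 : ∀ i j, 0 ≤ S i j) (hS1 : ∀ j, ∑ i, S i j = 1)
    (w u : Fin n → ℝ)
    (hw0 : ∀ i, 0 ≤ w i) (hw1 : ∑ i, w i = 1)
    (hu0 : ∀ i, 0 < u i) (hu1 : ∑ i, u i = 1)
    (α β γ : ℝ) (hα : α ∈ Set.Icc (0 : ℝ) 1) (hβ : β ∈ Set.Icc (0 : ℝ) 1)
    (hγ : γ ∈ Set.Icc (0 : ℝ) 1) (hsum : α + β + γ = 1) (hα1 : α < 1)
    (R : Matrix (Fin n) (Fin n) ℝ)
    (hR : R = Matrix.of fun i j => α * S i j + β * w i + γ * u i) :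
    (∃! y : Fin n → ℝ, (∀ i, 0 ≤ y i) ∧ ∑ i, y i = 1 ∧ y = R.mulVec y) ∧
      ∀ y : Fin n → ℝ, (∀ i, 0 ≤ y i) → ∑ i, y i = 1 →
        (y = R.mulVec y ↔ y = α • S.mulVec y + β • w + γ • u) := by
  have hS : S ∈ colStochastic ℝ (Fin n) := mem_colStochastic_iff_sum.2 ⟨hS0, hS1⟩
  have hR' : R = of fun i j => (α • S) i j + (β • w + γ • u) i := by
    ext
    simp only [hR, of_apply, Matrix.smul_apply, Pi.add_apply, Pi.smul_apply, smul_eq_mul]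
    ring
  have hRy (y : Fin n → ℝ) (hy : ∑ i, y i = 1) : R *ᵥ y = α • S *ᵥ y + (β • w + γ • u) := by
    rw [hR', of_add_mulVec, hy, one_smul, smul_mulVec]
  have hb0 (i : Fin n) : 0 ≤ (β • w + γ • u) i :=
    add_nonneg (mul_nonneg hβ.1 (hw0 i)) (mul_nonneg hγ.1 (hu0 i).le)
  have hb1 : ∑ i, (β • w + γ • u) i = 1 - α := by
    simp only [Pi.add_apply, Pi.smul_apply, smul_eq_mul, sum_add_distrib, ← mul_sum, hw1, hu1]
    linarith
  obtain ⟨y, ⟨hy, hyT⟩, huniq⟩ :=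
    existsUnique_eq_smul_mulVec_add_mem_stdSimplex hS hα.1 hα1 hb0 hb1
  refine ⟨⟨y, ⟨hy.1, hy.2, hyT.trans (hRy y hy.2).symm⟩, ?_⟩, ?_⟩
  · rintro z ⟨hz0, hz1, hz⟩
    exact huniq z ⟨⟨hz0, hz1⟩, hz.trans (hRy z hz1)⟩
  · intro y _ hy1
    rw [hRy y hy1, add_assoc]

theorem attrank_convergence (n : ℕ) (S : Matrix (Fin n) (Fin n) ℝ)
    (hS0 : ∀ i j, 0 ≤ S i j) (hS1 : ∀ j, ∑ i, S i j = 1)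
    (w u : Fin n → ℝ)
    (hw0 : ∀ i, 0 ≤ w i) (hw1 : ∑ i, w i = 1)
    (hu0 : ∀ i, 0 < u i) (hu1 : ∑ i, u i = 1)
    (α β γ : ℝ) (hα : α ∈ Set.Icc (0 : ℝ) 1) (hβ : β ∈ Set.Icc (0 : ℝ) 1)
    (hγ : γ ∈ Set.Icc (0 : ℝ) 1) (hsum : α + β + γ = 1) (hα1 : α < 1) (hγ0 : 0 < γ)
    (R : Matrix (Fin n) (Fin n) ℝ)
    (hR : R = Matrix.of fun i j => α * S i j + β * w i + γ * u i) :
    (∃! y : Fin n → ℝ, (∀ i, 0 ≤ y i) ∧ ∑ i, y i = 1 ∧ y = R.mulVec y) ∧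
      ∀ y : Fin n → ℝ, (∀ i, 0 ≤ y i) → ∑ i, y i = 1 →
        (y = R.mulVec y ↔ y = α • S.mulVec y + β • w + γ • u) :=
  attrank_convergence_general n S hS0 hS1 w u hw0 hw1 hu0 hu1 α β γ hα hβ hγ hsum hα1 R hR
end
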